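/- Let T be the tree on 2×2 generated by a frame, with body ⌈T⌉ ⊆ 2^ω × 2^ω. Then ⌈T⌉ ∩ 𝔼_0 is not separable from ⌈T⌉ ∖ 𝔼_0 by a pot(Π^0_2) set, where 𝔼_0 := {(α,β) ∈ 2^ω × 2^ω : ∃m ∈ ω ∀n > m, α(n) = β(n)}. -/

import Mathlib

open Set Function

abbrev Cantor : Type := ℕ → Bool
abbrev Baire : Type := ℕ → ℕ

abbrev SetClass : Type 1 := (Z : Type) → TopologicalSpace Z → Set Z → Prop

/-- `S` is a Borel subset of `Z`. -/
def IsBorel {Z : Type} [TopologicalSpace Z] (S : Set Z) : Prop :=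
  @MeasurableSet Z (borel Z) S

/-- the inverse `A⁻¹` of a relation. -/
def relInv {X : Type} (A : Set (X × X)) : Set (X × X) := {p | (p.2, p.1) ∈ A}

/-- the symmetrization `s(A) = A ∪ A⁻¹` of a relation. -/
def symmRel {X : Type} (A : Set (X × X)) : Set (X × X) := A ∪ relInv A

def IsIrreflRel {X : Type} (A : Set (X × X)) : Prop := ∀ x : X, (x, x) ∉ A

def IsAntisymmRel {X : Type} (A : Set (X × X)) : Prop :=
  ∀ x y : X, (x, y) ∈ A → (y, x) ∈ A → x = y

/-- an oriented graph is an irreflexive antisymmetric relation. -/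
def IsOrientedGraph {X : Type} (A : Set (X × X)) : Prop := IsIrreflRel A ∧ IsAntisymmRel A

/-- a relation is acyclic if there is no injective sequence `(x_i)_{i ≤ n}` with `n ≥ 2`,
`(x_i, x_{i+1}) ∈ A` for `i < n` and `(x_n, x_0) ∈ A`. -/
def AcyclicRel {X : Type} (A : Set (X × X)) : Prop :=
  ¬ ∃ (n : ℕ) (x : ℕ → X), 2 ≤ n ∧ (∀ i j, i ≤ n → j ≤ n → x i = x j → i = j) ∧
      (∀ i, i < n → (x i, x (i + 1)) ∈ A) ∧ (x n, x 0) ∈ A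

/-- `A` is s-acyclic if `s(A)` is acyclic. -/
def SAcyclic {X : Type} (A : Set (X × X)) : Prop := AcyclicRel (symmRel A)

/-- a set is locally countable if all of its vertical and horizontal sections are countable. -/
def LocallyCountable {X Y : Type} (A : Set (X × Y)) : Prop :=
  (∀ x : X, {y : Y | (x, y) ∈ A}.Countable) ∧ (∀ y : Y, {x : X | (x, y) ∈ A}.Countable)

/-- a space is zero-dimensional if it has a neighborhood basis of clopen sets. -/
def ZeroDimensional (Z : Type) [TopologicalSpace Z] : Prop :=
  ∀ x : Z, ∀ U ∈ nhds x, ∃ V : Set Z, IsClopen V ∧ x ∈ V ∧ V ⊆ U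

/-- `B ⊆ X × Y` is potentially in the class `Γ`: there are finer Polish topologies on `X` and
on `Y` for which `B` belongs to `Γ` computed in the corresponding product space. -/
def Potentially (Γ : SetClass) {X Y : Type} [tX : TopologicalSpace X] [tY : TopologicalSpace Y]
    (B : Set (X × Y)) : Prop :=
  ∃ (σ : TopologicalSpace X) (τ : TopologicalSpace Y),
    σ ≤ tX ∧ τ ≤ tY ∧ @PolishSpace X σ ∧ @PolishSpace Y τ ∧
      Γ (X × Y) (@instTopologicalSpaceProd X Y σ τ) B

/-- `A` is separable from `B` by a `pot(Γ)` set. -/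
def SepPot (Γ : SetClass) {X Y : Type} [TopologicalSpace X] [TopologicalSpace Y]
    (A B : Set (X × Y)) : Prop :=
  ∃ S : Set (X × Y), Potentially Γ S ∧ A ⊆ S ∧ Disjoint S B

def openClass : SetClass := fun Z t S => @IsOpen Z t S

def closedClass : SetClass := fun Z t S => @IsClosed Z t S

/-- the class `Σ^0_2` of countable unions of closed sets. -/
def sigma02Class : SetClass := fun Z t S =>
  ∃ F : ℕ → Set Z, (∀ n, @IsClosed Z t (F n)) ∧ S = ⋃ n, F n

/-- the class `Π^0_2` of countable intersections of open sets. -/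
def pi02Class : SetClass := fun Z t S =>
  ∃ U : ℕ → Set Z, (∀ n, @IsOpen Z t (U n)) ∧ S = ⋂ n, U n

/-- the class `Δ^0_2 = Σ^0_2 ∩ Π^0_2`. -/
def delta02Class : SetClass := fun Z t S => sigma02Class Z t S ∧ pi02Class Z t S

/-- the dual class `Ď` of complements of sets in `Γ`. -/
def dualClass (Γ : SetClass) : SetClass := fun Z t S => Γ Z t Sᶜ

def interClass (Γ Γ' : SetClass) : SetClass := fun Z t S => Γ Z t S ∧ Γ' Z t S

/-- standard parity of an ordinal: the parity of its finite part. -/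
def OrdEven (o : Ordinal.{0}) : Prop := Even (o % Ordinal.omega0)

/-- the difference set `D((O_θ)_{θ<η})`. -/
def DiffSet {Z : Type} (η : Ordinal.{0}) (O : Ordinal.{0} → Set Z) : Set Z :=
  {x | ∃ θ, θ < η ∧ (OrdEven θ ↔ ¬ OrdEven η) ∧ x ∈ O θ ∧ ∀ θ', θ' < θ → x ∉ O θ'}

/-- the class `D_η(Γ)` of `η`-differences of increasing sequences of sets in `Γ`. -/
def DClass (η : Ordinal.{0}) (Γ : SetClass) : SetClass := fun Z t S =>
  ∃ O : Ordinal.{0} → Set Z, (∀ θ, θ < η → Γ Z t (O θ)) ∧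
    (∀ θ₁ θ₂, θ₁ ≤ θ₂ → θ₂ < η → O θ₁ ⊆ O θ₂) ∧ S = DiffSet η O

/-- choice between a relation and its inverse. -/
def cSel {X : Type} (b : Bool) (C : Set (X × X)) : Set (X × X) :=
  if b then C else relInv C

/-- quasi-acyclicity of a relation on a Polish space. -/
def QuasiAcyclic {X : Type} [TopologicalSpace X] (A : Set (X × X)) : Prop :=
  ∃ C : ℕ → Set (X × X),
    (∀ n, Potentially closedClass (C n)) ∧
    (∀ m n, m ≠ n → Disjoint (C m) (C n)) ∧
    (⋃ n, C n) = A ∧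
    ∀ z₀ z₁ z₂ : X, (z₀, z₁) ∈ symmRel A → (z₁, z₂) ∈ symmRel A → z₀ ≠ z₂ →
      ∀ (k : ℕ) (nn : ℕ → ℕ) (ε : ℕ → Bool) (x y : ℕ → X), 1 ≤ k →
        (∀ i, 1 ≤ i → i ≤ k →
          x i ≠ z₀ ∧ x i ≠ z₁ ∧ x i ≠ z₂ ∧ y i ≠ z₀ ∧ y i ≠ z₁ ∧ y i ≠ z₂) →
        (z₀, x 1) ∈ cSel (ε 1) (C (nn 1)) →
        (z₂, y 1) ∈ cSel (ε 1) (C (nn 1)) →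
        (∀ i, 2 ≤ i → i ≤ k →
          (x (i - 1), x i) ∈ cSel (ε i) (C (nn i)) ∧
          (y (i - 1), y i) ∈ cSel (ε i) (C (nn i))) →
        x k ≠ y k

/-- `(X, Y, A, B) ⊑ (X', Y', A', B')` : reduction by a pair of injective continuous maps. -/
def Reducible {X Y X' Y' : Type} [TopologicalSpace X] [TopologicalSpace Y]
    [TopologicalSpace X'] [TopologicalSpace Y']
    (A B : Set (X × Y)) (A' B' : Set (X' × Y')) : Prop :=
  ∃ (f : X → X') (g : Y → Y'), Continuous f ∧ Continuous g ∧
    Function.Injective f ∧ Function.Injective g ∧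
    (∀ p ∈ A, (f p.1, g p.2) ∈ A') ∧ (∀ p ∈ B, (f p.1, g p.2) ∈ B')

/-- reduction via a square map `f × f`. -/
def SqReducible {X X' : Type} [TopologicalSpace X] [TopologicalSpace X']
    (A B : Set (X × X)) (A' B' : Set (X' × X')) : Prop :=
  ∃ f : X → X', Continuous f ∧ Function.Injective f ∧
    (∀ p ∈ A, (f p.1, f p.2) ∈ A') ∧ (∀ p ∈ B, (f p.1, f p.2) ∈ B')

/-- a set is `K_σ` if it is a countable union of compact sets. -/
def IsKSigma {Z : Type} [TopologicalSpace Z] (S : Set Z) : Prop :=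
  ∃ K : ℕ → Set Z, (∀ n, IsCompact (K n)) ∧ S = ⋃ n, K n

/-- Wadge classes of Borel sets. -/
def IsWadgeClassOfBorel (Γ : SetClass) : Prop :=
  ∃ A : Set Baire, IsBorel A ∧
    ∀ (Z : Type) [tZ : TopologicalSpace Z], PolishSpace Z → ZeroDimensional Z →
      ∀ S : Set Z, (Γ Z tZ S ↔ ∃ f : Z → Baire, Continuous f ∧ S = f ⁻¹' A)

/-- the Borel classes `Σ^0_ξ`, `ξ ≥ 1`. -/
inductive IsSigma0 : Ordinal.{0} → (Z : Type) → TopologicalSpace Z → Set Z → Prop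
  | base (Z : Type) (t : TopologicalSpace Z) (S : Set Z) :
      @IsOpen Z t S → IsSigma0 1 Z t S
  | iUnion (Z : Type) (t : TopologicalSpace Z) (ξ : Ordinal.{0}) (o : ℕ → Ordinal.{0})
      (f : ℕ → Set Z) : 1 < ξ → (∀ n, (1 : Ordinal.{0}) ≤ o n) → (∀ n, o n < ξ) →
      (∀ n, IsSigma0 (o n) Z t (f n)ᶜ) → IsSigma0 ξ Z t (⋃ n, f n)

/-- the family of classes `D_η(Σ^0_1)`, `Ď_η(Σ^0_1)` (`1 ≤ η < ω₁`), `D_n(Σ^0_2)`,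
`Ď_n(Σ^0_2)` (`1 ≤ n < ω`) and `Δ^0_2`. -/
def GammaFamily (Γ : SetClass) : Prop :=
  (∃ η : Ordinal.{0}, 1 ≤ η ∧ η.card ≤ Cardinal.aleph0 ∧ Γ = DClass η openClass) ∨
  (∃ η : Ordinal.{0}, 1 ≤ η ∧ η.card ≤ Cardinal.aleph0 ∧ Γ = dualClass (DClass η openClass)) ∨
  (∃ n : ℕ, 1 ≤ n ∧ Γ = DClass (n : Ordinal.{0}) sigma02Class) ∨
  (∃ n : ℕ, 1 ≤ n ∧ Γ = dualClass (DClass (n : Ordinal.{0}) sigma02Class)) ∨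
  Γ = delta02Class

/-- specification of the map `φ_η : ω^{<ω} → {-1} ∪ (η+1)`, where `none` codes `-1`. -/
def PhiSpec (η : Ordinal.{0}) (φ : List ℕ → Option Ordinal.{0}) : Prop :=
  φ [] = some η ∧
  (∀ s o, φ s = some o → o ≤ η) ∧
  (∀ s n, φ s = none → φ (s ++ [n]) = none) ∧
  (∀ s n, φ s = some 0 → φ (s ++ [n]) = none) ∧
  (∀ s θ n, φ s = some (θ + 1) → φ (s ++ [n]) = some θ) ∧
  (∀ s o, φ s = some o → Order.IsSuccLimit o →
    ∃ θf : ℕ → Ordinal.{0}, (∀ n, φ (s ++ [n]) = some (θf n)) ∧ StrictMono θf ∧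
      (∀ n, ¬ OrdEven (θf n)) ∧ ∀ β, β < o → ∃ n, β ≤ θf n)

/-- the prime coding `I(s) = p_0^{s(0)+1} ⋯ p_{|s|-1}^{s(|s|-1)+1}`, `I(∅) = 0`. -/
noncomputable def Ifun (s : List ℕ) : ℕ :=
  if s = [] then 0
  else ∏ i ∈ Finset.range s.length, (Nat.nth Nat.Prime i) ^ (s.getD i 0 + 1)

/-- the bijection `⟨·⟩_η : T_η → ω`, increasing with respect to `I`. -/
noncomputable def cEnum (φ : List ℕ → Option Ordinal.{0}) (s : List ℕ) : ℕ :=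
  Nat.card {t : List ℕ // φ t ≠ none ∧ Ifun t < Ifun s}

/-- the length-lexicographic enumeration `∅, 0, 1, 00, 01, 10, 11, …` of `2^{<ω}`. -/
def lexEnum (n : ℕ) : List Bool := ((n + 1).bits).dropLast.reverse

/-- the map `ψ` enumerating `∅, ∅, 0, 0, 1, 1, 00, 00, 01, 01, …`. -/
def psiFun (q : ℕ) : List Bool := lexEnum (q / 2)

noncomputable def tAux (φ : List ℕ → Option Ordinal.{0}) (ε : Bool) : List ℕ → List Bool
  | [] => []
  | q :: r =>
      tAux φ ε r ++ psiFun q ++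
        List.replicate
          (cEnum φ (r.reverse ++ [q]) - cEnum φ r.reverse - (psiFun q).length - 1) false ++
        [ε]

/-- the sequences `t^ε_s` for `s ∈ T_η`. -/
noncomputable def tSeq (φ : List ℕ → Option Ordinal.{0}) (ε : Bool) (s : List ℕ) : List Bool :=
  tAux φ ε s.reverse

/-- the concatenation `u ⌢ γ ∈ 2^ω` of a finite sequence with an infinite one. -/
def appendSeq (u : List Bool) (γ : Cantor) : Cantor :=
  fun n => if n < u.length then u.getD n false else γ (n - u.length)

/-- the sets `ℕ^η_ε = {(t^0_s ⌢ γ, t^1_s ⌢ γ) | s ∈ T_η, parity(|s|) = ε}`,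
where `ε = false` codes `0` and `ε = true` codes `1`. -/
noncomputable def NNset (φ : List ℕ → Option Ordinal.{0}) (ε : Bool) : Set (Cantor × Cantor) :=
  {p | ∃ (s : List ℕ) (γ : Cantor), φ s ≠ none ∧ (Even s.length ↔ ε = false) ∧
      p.1 = appendSeq (tSeq φ false s) γ ∧ p.2 = appendSeq (tSeq φ true s) γ}

/-- the sets `𝕊^η_ε = {(t^0_s ⌢ γ, t^1_s ⌢ γ) | s ∈ T_η \ {∅},
parity(|s|) = 1 - |parity(s(0)) - ε|}`. -/
noncomputable def SSset (φ : List ℕ → Option Ordinal.{0}) (ε : Bool) : Set (Cantor × Cantor) :=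
  {p | ∃ (s : List ℕ) (γ : Cantor), φ s ≠ none ∧ s ≠ [] ∧
      ((¬ Even s.length) ↔ (Even (s.headD 0) ↔ ε = false)) ∧
      p.1 = appendSeq (tSeq φ false s) γ ∧ p.2 = appendSeq (tSeq φ true s) γ}

/-- prepending a digit to an element of the Cantor space. -/
def consSeq (b : Bool) (α : Cantor) : Cantor := fun n => if n = 0 then b else α (n - 1)

/-- the relation `{(0⌢α, 1⌢β) | (α, β) ∈ A}`. -/
def prep01 (A : Set (Cantor × Cantor)) : Set (Cantor × Cantor) :=
  {p | ∃ q ∈ A, p.1 = consSeq false q.1 ∧ p.2 = consSeq true q.2}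

/-- the sets `𝔹^η_ε = {(0⌢α, 1⌢β) | (α, β) ∈ ℕ^η_ε}`. -/
noncomputable def BBset (φ : List ℕ → Option Ordinal.{0}) (ε : Bool) : Set (Cantor × Cantor) :=
  prep01 (NNset φ ε)

/-- the sets `ℂ^η_ε = {(0⌢α, 1⌢β) | (α, β) ∈ 𝕊^η_ε}`. -/
noncomputable def CCset (φ : List ℕ → Option Ordinal.{0}) (ε : Bool) : Set (Cantor × Cantor) :=
  prep01 (SSset φ ε)

/-- the initial segment `α | l` of `α ∈ 2^ω`. -/
def listInit (α : Cantor) (l : ℕ) : List Bool := (List.range l).map α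

/-- frames, generating trees on `2 × 2`. -/
def IsFrame (F : ℕ → List Bool × List Bool) : Prop :=
  (∀ l : ℕ, (F l).1.length = l ∧ (F l).2.length = l) ∧
  (∀ p q : ℕ, ∀ w : List Bool, ∃ N : ℕ,
      (∃ l : ℕ, F l =
        ((F q).1 ++ false :: (w ++ List.replicate N false),
         (F q).2 ++ true :: (w ++ List.replicate N false))) ∧
      (((F q).1.length + 1 + w.length + N) - 1).unpair.1 = p) ∧
  (∀ l : ℕ, 0 < l → ∃ q : ℕ, q < l ∧ ∃ w : List Bool,
      (F l).1 = (F q).1 ++ false :: w ∧ (F l).2 = (F q).2 ++ true :: w)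

/-- the tree on `2 × 2` generated by a frame. -/
def frameTree (F : ℕ → List Bool × List Bool) : Set (List Bool × List Bool) :=
  {p | p.1.length = p.2.length ∧
      (p.1 = [] ∨ ∃ (q : ℕ) (w : List Bool),
        p.1 = (F q).1 ++ false :: w ∧ p.2 = (F q).2 ++ true :: w)}

/-- the body `⌈T⌉` of a tree on `2 × 2`. -/
def treeBody (T : Set (List Bool × List Bool)) : Set (Cantor × Cantor) :=
  {p | ∀ l : ℕ, (listInit p.1 l, listInit p.2 l) ∈ T}

/-- the equivalence relation `𝔼_0` of eventual agreement. -/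
def E0rel : Set (Cantor × Cantor) := {p | ∃ m : ℕ, ∀ n, m < n → p.1 n = p.2 n}

/-- the sets `𝔼^ε_0`. -/
def E0par (ε : ℕ) : Set (Cantor × Cantor) :=
  {p | ∃ m : ℕ, 0 < m ∧ p.1 m ≠ p.2 m ∧ (∀ n, m < n → p.1 n = p.2 n) ∧
      (m - 1).unpair.1 % 2 = ε}

/-- the shift map `S : 2^ω → 2^ω`. -/
def shiftSeq (α : Cantor) : Cantor := fun m => α (m + 1)

/-- the symmetric difference of two elements of `2^ω`. -/
def xorSeq (α β : Cantor) : Cantor := fun m => xor (α m) (β m)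

/-- the set `C_0` of eventually null sequences. -/
def Czero : Set Cantor := {α | ∃ m : ℕ, ∀ p, m ≤ p → α p = false}

/-- the sets `C_θ` built from a surjection `S` onto `η`. -/
def CTheta (S : ℕ → Ordinal.{0}) : Ordinal.{0} → Set Cantor := fun θ =>
  if θ = 0 then Czero
  else {α | ∃ m : ℕ, (∀ p : ℕ, α (Nat.pair m p) = false) ∧ S (Nat.unpair m).1 ≤ θ}

/-- the set `D_η = D((C_θ)_{θ<η})`. -/
def DEtaSet (η : Ordinal.{0}) (S : ℕ → Ordinal.{0}) : Set Cantor := DiffSet η (CTheta S)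

/-- the set `ℕ_n = {(α, β) ∈ ⌈T⌉ | S(α Δ β) ∉ D_n}`. -/
def NDn (F : ℕ → List Bool × List Bool) (n : ℕ) (Sn : ℕ → ℕ) : Set (Cantor × Cantor) :=
  {p | p ∈ treeBody (frameTree F) ∧
      shiftSeq (xorSeq p.1 p.2) ∉ DEtaSet (n : Ordinal.{0}) (fun m => (Sn m : Ordinal.{0}))}

/-!
Suppose `S` separates and is `Π⁰₂` for finer Polish topologies `σ`, `τ`. Every `σ`-open set is
Borel (Lusin–Souslin), hence agrees with an open set off a meagre set; over a countable basis this
makes `σ` and `τ` induce the usual topologies on comeagre sets `G` and `H`, so that `S ∩ (G × H)`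
is an ordinary `G_δ` set.

Continuing a node `(s_q⌢0, t_q⌢1)` of the frame by one generic common tail gives a point of
`⌈T⌉ ∩ 𝔼₀ ∩ (G × H) ⊆ S ∩ (G × H)`. By condition (b) of frames, an open set containing such a
point contains the whole cylinder of a longer node, so the open sets whose intersection is
`S ∩ (G × H)` can be met one by one along a nested sequence of node cylinders. By compactness
these cylinders have a common point; it lies in `S` and on `⌈T⌉`, and its coordinates differ at
the last place of infinitely many nodes, so it is not in `𝔼₀`.
-/

open Filter TopologicalSpace

theorem exists_mem_residual_continuousOn_id_of_le {X : Type*} {σ : TopologicalSpace X}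
    [t : TopologicalSpace X] [PolishSpace X] (hσ : @PolishSpace X σ) (hle : σ ≤ t) :
    ∃ G ∈ residual X, @ContinuousOn X X t σ id G := by
  obtain ⟨B, hBc, -, hB⟩ := @exists_countable_basis X σ hσ.toSecondCountableTopology
  borelize X
  have hBorel : ∀ V ∈ B, MeasurableSet V := fun V hV => by
    rw [‹BorelSpace X›.measurable_eq, ← MeasureTheory.borel_eq_borel_of_le hσ ‹_› hle]
    exact MeasurableSpace.measurableSet_generateFrom (IsTopologicalBasis.isOpen (t := σ) hB hV)
  choose W hWo hVW using fun V hV => (hBorel V hV).residualEq_isOpen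
  refine ⟨{x | ∀ V (hV : V ∈ B), x ∈ V ↔ x ∈ W V hV},
    (eventually_countable_ball hBc).2 fun V hV => eventuallyEq_set.1 (hVW V hV), ?_⟩
  refine (@IsTopologicalBasis.continuousOn_iff X X t _ σ B hB id).2
    fun V hV => ⟨W V hV, hWo V hV, ?_⟩
  ext x
  exact ⟨fun ⟨hxV, hx⟩ => ⟨(hx V hV).1 hxV, hx⟩, fun ⟨hxW, hx⟩ => ⟨(hx V hV).2 hxW, hx⟩⟩

theorem exists_residual_isGδ_iInter_inter_of_le {X Y : Type*} {σ : TopologicalSpace X}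
    {τ : TopologicalSpace Y} [tX : TopologicalSpace X] [tY : TopologicalSpace Y] [PolishSpace X]
    [PolishSpace Y] (hσ : @PolishSpace X σ) (hτ : @PolishSpace Y τ) (hσX : σ ≤ tX)
    (hτY : τ ≤ tY) {U : ℕ → Set (X × Y)}
    (hU : ∀ n, @IsOpen (X × Y) (@instTopologicalSpaceProd X Y σ τ) (U n)) :
    ∃ G ∈ residual X, ∃ H ∈ residual Y, IsGδ ((⋂ n, U n) ∩ G ×ˢ H) := by
  obtain ⟨G₀, hG₀, hcontG⟩ := exists_mem_residual_continuousOn_id_of_le hσ hσX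
  obtain ⟨H₀, hH₀, hcontH⟩ := exists_mem_residual_continuousOn_id_of_le hτ hτY
  obtain ⟨G, hGG₀, hGδ, hGd⟩ := mem_residual.1 hG₀
  obtain ⟨H, hHH₀, hHδ, hHd⟩ := mem_residual.1 hH₀
  have hcont : @ContinuousOn (X × Y) (X × Y) _ (@instTopologicalSpaceProd X Y σ τ) id (G ×ˢ H) :=
    @ContinuousOn.prodMap X Y X Y tX tY σ τ id id G H
      (@ContinuousOn.mono X X tX σ id G₀ G hcontG hGG₀)
      (@ContinuousOn.mono Y Y tY τ id H₀ H hcontH hHH₀)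
  choose W hWo hW using fun n =>
    (@continuousOn_iff' (X × Y) (X × Y) _ (@instTopologicalSpaceProd X Y σ τ) id _).1 hcont
      (U n) (hU n)
  refine ⟨G, residual_of_dense_Gδ hGδ hGd, H, residual_of_dense_Gδ hHδ hHd, ?_⟩
  rw [iInter_inter]
  simp only [preimage_id] at hW
  rw [iInter_congr hW, Set.prod_eq]
  exact .iInter fun n => (hWo n).isGδ.inter <|
    (hGδ.preimage continuous_fst).inter (hHδ.preimage continuous_snd)

theorem Potentially.exists_residual_isGδ_inter {X Y : Type} [tX : TopologicalSpace X]
    [tY : TopologicalSpace Y] [PolishSpace X] [PolishSpace Y] {S : Set (X × Y)}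
    (hS : Potentially pi02Class S) : ∃ G ∈ residual X, ∃ H ∈ residual Y, IsGδ (S ∩ G ×ˢ H) := by
  obtain ⟨σ, τ, hσX, hτY, hσ, hτ, U, hU, rfl⟩ := hS
  exact exists_residual_isGδ_iInter_inter_of_le (tX := tX) (tY := tY) hσ hτ hσX hτY hU

instance : PolishSpace Cantor := {}

def listCylinder (u : List Bool) : Set Cantor := ⋂ i : Fin u.length, {x | x i = u[i]}

lemma mem_listCylinder {u : List Bool} {x : Cantor} :
    x ∈ listCylinder u ↔ ∀ i (hi : i < u.length), x i = u[i] := by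
  simp [listCylinder, Fin.forall_iff]

lemma isOpen_listCylinder (u : List Bool) : IsOpen (listCylinder u) :=
  isOpen_iInter_of_finite fun i =>
    (isOpen_discrete {u[i]}).preimage (continuous_apply (A := fun _ : ℕ => Bool) i.1)

lemma isClosed_listCylinder (u : List Bool) : IsClosed (listCylinder u) :=
  isClosed_iInter fun i =>
    (isClosed_discrete {u[i]}).preimage (continuous_apply (A := fun _ : ℕ => Bool) i.1)

lemma listCylinder_anti {u v : List Bool} (h : u <+: v) : listCylinder v ⊆ listCylinder u :=
  fun x hx => mem_listCylinder.2 fun i hi => by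
    rw [mem_listCylinder.1 hx i (hi.trans_le h.length_le), h.getElem hi]

lemma listInit_eq_take_of_mem_listCylinder {u : List Bool} {x : Cantor}
    (hx : x ∈ listCylinder u) {l : ℕ} (hl : l ≤ u.length) : listInit x l = u.take l :=
  List.ext_getElem (by simp [listInit, hl]) fun i hi _ => by
    simp only [listInit, List.length_map, List.length_range] at hi
    simp [listInit, mem_listCylinder.1 hx i (hi.trans_le hl)]

lemma exists_listCylinder_subset {U : Set Cantor} (hU : IsOpen U) {x : Cantor} (hx : x ∈ U) :
    ∃ k, ∀ u : List Bool, x ∈ listCylinder u → k ≤ u.length → listCylinder u ⊆ U := by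
  obtain ⟨_, ⟨z, k, rfl⟩, hxz, hzU⟩ :=
    (PiNat.isTopologicalBasis_cylinders _).exists_subset_of_mem_open hx hU
  refine ⟨k, fun u hxu hk y hy => hzU fun i hi => ?_⟩
  rw [mem_listCylinder.1 hy i (hi.trans_le hk), ← mem_listCylinder.1 hxu i (hi.trans_le hk)]
  exact hxz i hi

lemma appendSeq_mem_listCylinder_append (u : List Bool) (γ : Cantor) (k : ℕ) :
    appendSeq u γ ∈ listCylinder (u ++ listInit γ k) := by
  refine mem_listCylinder.2 fun i hi => ?_
  by_cases hiu : i < u.length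
  · simp [appendSeq, hiu, List.getElem_append_left hiu]
  · simp [appendSeq, hiu, List.getElem_append_right (Nat.le_of_not_lt hiu), listInit]

lemma appendSeq_mem_listCylinder (u : List Bool) (γ : Cantor) : appendSeq u γ ∈ listCylinder u := by
  simpa [listInit] using appendSeq_mem_listCylinder_append u γ 0

lemma appendSeq_drop_of_mem_listCylinder {u : List Bool} {x : Cantor}
    (hx : x ∈ listCylinder u) : appendSeq u (fun n => x (n + u.length)) = x := by
  funext n
  by_cases hn : n < u.length
  · simp [appendSeq, hn, mem_listCylinder.1 hx n hn]
  · simp [appendSeq, hn, Nat.sub_add_cancel (Nat.le_of_not_lt hn)]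

lemma continuous_appendSeq (u : List Bool) : Continuous (appendSeq u) :=
  continuous_pi fun n => by
    by_cases hn : n < u.length
    · simpa [appendSeq, hn] using continuous_const
    · simpa [appendSeq, hn] using continuous_apply (n - u.length)

lemma isOpenMap_appendSeq (u : List Bool) : IsOpenMap (appendSeq u) := by
  intro V hV
  have : appendSeq u '' V = listCylinder u ∩ (fun x n => x (n + u.length)) ⁻¹' V := by
    ext x
    constructor
    · rintro ⟨γ, hγ, rfl⟩
      refine ⟨appendSeq_mem_listCylinder u γ, ?_⟩
      simpa [appendSeq] using hγ
    · rintro ⟨hx, hxV⟩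
      exact ⟨_, hxV, appendSeq_drop_of_mem_listCylinder hx⟩
  rw [this]
  exact (isOpen_listCylinder u).inter
    (hV.preimage (continuous_pi fun n => continuous_apply (n + u.length)))

lemma mem_treeBody_of_forall_exists_listCylinder {T : Set (List Bool × List Bool)}
    (hT : ∀ p ∈ T, ∀ j, (p.1.take j, p.2.take j) ∈ T) {x y : Cantor}
    (h : ∀ l, ∃ p ∈ T, l ≤ p.1.length ∧ l ≤ p.2.length ∧
      x ∈ listCylinder p.1 ∧ y ∈ listCylinder p.2) :
    (x, y) ∈ treeBody T := fun l => by
  obtain ⟨p, hpT, hl₁, hl₂, hx, hy⟩ := h l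
  rw [listInit_eq_take_of_mem_listCylinder hx hl₁, listInit_eq_take_of_mem_listCylinder hy hl₂]
  exact hT p hpT l

def nodePoint (F : ℕ → List Bool × List Bool) (q : ℕ) (γ : Cantor) : Cantor × Cantor :=
  (appendSeq ((F q).1 ++ [false]) γ, appendSeq ((F q).2 ++ [true]) γ)

def nodeCylinder (F : ℕ → List Bool × List Bool) (q : ℕ) : Set (Cantor × Cantor) :=
  listCylinder ((F q).1 ++ [false]) ×ˢ listCylinder ((F q).2 ++ [true])

lemma nodePoint_mem_nodeCylinder (F : ℕ → List Bool × List Bool) (q : ℕ) (γ : Cantor) :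
    nodePoint F q γ ∈ nodeCylinder F q :=
  ⟨appendSeq_mem_listCylinder _ γ, appendSeq_mem_listCylinder _ γ⟩

lemma isClosed_nodeCylinder (F : ℕ → List Bool × List Bool) (q : ℕ) :
    IsClosed (nodeCylinder F q) :=
  (isClosed_listCylinder _).prod (isClosed_listCylinder _)

lemma exists_nodePoint_mem_prod (F : ℕ → List Bool × List Bool) {G H : Set Cantor}
    (hG : G ∈ residual Cantor) (hH : H ∈ residual Cantor) (q : ℕ) :
    ∃ γ, nodePoint F q γ ∈ G ×ˢ H :=
  (dense_of_mem_residual (inter_mem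
    (tendsto_residual_of_isOpenMap (continuous_appendSeq _) (isOpenMap_appendSeq _) hG)
    (tendsto_residual_of_isOpenMap (continuous_appendSeq _) (isOpenMap_appendSeq _) hH))).nonempty

namespace IsFrame

variable {F : ℕ → List Bool × List Bool} (hF : IsFrame F)
include hF

lemma length_fst (q : ℕ) : (F q).1.length = q := (hF.1 q).1

lemma length_snd (q : ℕ) : (F q).2.length = q := (hF.1 q).2

lemma mk_mem_frameTree (q : ℕ) (w : List Bool) :
    ((F q).1 ++ false :: w, (F q).2 ++ true :: w) ∈ frameTree F :=
  ⟨by simp [hF.length_fst, hF.length_snd], Or.inr ⟨q, w, rfl, rfl⟩⟩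

lemma mem_frameTree (q : ℕ) : F q ∈ frameTree F := by
  rcases Nat.eq_zero_or_pos q with rfl | hq
  · exact ⟨by rw [hF.length_fst, hF.length_snd],
      Or.inl (List.eq_nil_of_length_eq_zero (hF.length_fst 0))⟩
  · obtain ⟨q', -, w, h₁, h₂⟩ := hF.2.2 q hq
    rw [← Prod.mk.eta (p := F q), h₁, h₂]
    exact hF.mk_mem_frameTree q' w

lemma take_mem_frameTree {p : List Bool × List Bool} (hp : p ∈ frameTree F) (j : ℕ) :
    (p.1.take j, p.2.take j) ∈ frameTree F := by
  induction hn : p.1.length using Nat.strong_induction_on generalizing p with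
  | _ n ih =>
  obtain ⟨hlen, h | ⟨q, w, h₁, h₂⟩⟩ := hp
  · have h₂ : p.2 = [] := List.eq_nil_of_length_eq_zero (by rw [← hlen, h]; rfl)
    exact ⟨by simp [h, h₂], Or.inl (by simp [h])⟩
  rcases le_or_gt j q with hjq | hqj
  · have e₁ : p.1.take j = (F q).1.take j := by
      rw [h₁, List.take_append_of_le_length (by rw [hF.length_fst]; exact hjq)]
    have e₂ : p.2.take j = (F q).2.take j := by
      rw [h₂, List.take_append_of_le_length (by rw [hF.length_snd]; exact hjq)]
    rw [e₁, e₂]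
    exact ih q (by rw [← hn, h₁]; simp [hF.length_fst]) (hF.mem_frameTree q) (hF.length_fst q)
  · obtain ⟨i, rfl⟩ : ∃ i, j = q + (i + 1) := ⟨j - (q + 1), by omega⟩
    rw [h₁, h₂, List.take_append, List.take_append, hF.length_fst, hF.length_snd]
    simpa [List.take_of_length_le, hF.length_fst, hF.length_snd] using
      hF.mk_mem_frameTree q (w.take i)

lemma nodePoint_mem (q : ℕ) (γ : Cantor) :
    nodePoint F q γ ∈ treeBody (frameTree F) ∩ E0rel := by
  refine ⟨mem_treeBody_of_forall_exists_listCylinder (fun p hp j => hF.take_mem_frameTree hp j)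
    fun l => ⟨_, hF.mk_mem_frameTree q (listInit γ l), ?_, ?_, ?_, ?_⟩, q, fun n hn => ?_⟩
  · simp [listInit]; omega
  · simp [listInit]; omega
  · simpa using appendSeq_mem_listCylinder_append ((F q).1 ++ [false]) γ l
  · simpa using appendSeq_mem_listCylinder_append ((F q).2 ++ [true]) γ l
  · have : ¬ n < q + 1 := by omega
    simp [nodePoint, appendSeq, hF.length_fst, hF.length_snd, this]

lemma fst_ne_snd_of_mem_nodeCylinder {q : ℕ} {p : Cantor × Cantor} (hp : p ∈ nodeCylinder F q) :
    p.1 q ≠ p.2 q := by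
  rw [mem_listCylinder.1 hp.1 q (by simp [hF.length_fst]),
    mem_listCylinder.1 hp.2 q (by simp [hF.length_snd])]
  simp [List.getElem_append_right, hF.length_fst, hF.length_snd]

lemma mem_treeBody_diff_E0rel_of_frequently {p : Cantor × Cantor}
    (h : ∀ m, ∃ q, m ≤ q ∧ p ∈ nodeCylinder F q) : p ∈ treeBody (frameTree F) \ E0rel := by
  refine ⟨mem_treeBody_of_forall_exists_listCylinder (fun p hp j => hF.take_mem_frameTree hp j)
    fun l => ?_, fun ⟨m, hm⟩ => ?_⟩
  · obtain ⟨q, hlq, hp⟩ := h l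
    exact ⟨_, hF.mk_mem_frameTree q [], by simp [hF.length_fst]; omega,
      by simp [hF.length_snd]; omega, hp.1, hp.2⟩
  · obtain ⟨q, hmq, hp⟩ := h (m + 1)
    exact hF.fst_ne_snd_of_mem_nodeCylinder hp (hm q hmq)

lemma exists_nodeCylinder_subset {U : Set (Cantor × Cantor)} (hU : IsOpen U) {q : ℕ} {γ : Cantor}
    (hq : nodePoint F q γ ∈ U) : ∃ l, q < l ∧ nodeCylinder F l ⊆ nodeCylinder F q ∩ U := by
  obtain ⟨A, B, hA, hB, hxA, hyB, hAB⟩ := isOpen_prod_iff.1 hU _ _ hq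
  obtain ⟨k₁, hk₁⟩ := exists_listCylinder_subset hA hxA
  obtain ⟨k₂, hk₂⟩ := exists_listCylinder_subset hB hyB
  set v := listInit γ (max k₁ k₂)
  -- frame condition (b); the value `p = 0` is arbitrary
  obtain ⟨N, ⟨l, hl⟩, -⟩ := hF.2.1 0 q v
  have hl₁ : (F q).1 ++ [false] ++ v <+: (F l).1 ++ [false] :=
    ⟨List.replicate N false ++ [false], by simp [hl]⟩
  have hl₂ : (F q).2 ++ [true] ++ v <+: (F l).2 ++ [true] :=
    ⟨List.replicate N false ++ [true], by simp [hl]⟩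
  have hql : q < l := by
    have := hF.length_fst l
    rw [hl] at this
    simp [hF.length_fst] at this
    omega
  refine ⟨l, hql, fun p hp => ⟨⟨listCylinder_anti ((List.prefix_append _ _).trans hl₁) hp.1,
    listCylinder_anti ((List.prefix_append _ _).trans hl₂) hp.2⟩, hAB ⟨?_, ?_⟩⟩⟩
  · refine hk₁ _ (appendSeq_mem_listCylinder_append _ γ _) ?_ (listCylinder_anti hl₁ hp.1)
    simp [listInit]
    omega
  · refine hk₂ _ (appendSeq_mem_listCylinder_append _ γ _) ?_ (listCylinder_anti hl₂ hp.2)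
    simp [listInit]
    omega

theorem exists_mem_diff_E0rel_of_isGδ {P : Set (Cantor × Cantor)} (hP : IsGδ P)
    (hnode : ∀ q, ∃ γ, nodePoint F q γ ∈ P) :
    ∃ p ∈ P, p ∈ treeBody (frameTree F) \ E0rel := by
  obtain ⟨U, hUo, rfl⟩ := hP.eq_iInter_nat
  choose γ hγ using hnode
  choose next hnext_lt hnext using fun n q =>
    hF.exists_nodeCylinder_subset (hUo n) (mem_iInter.1 (hγ q) n)
  let Q : ℕ → ℕ := fun n => Nat.rec 0 next n
  have hQ : ∀ n, nodeCylinder F (Q (n + 1)) ⊆ nodeCylinder F (Q n) ∩ U n := fun n => hnext n (Q n)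
  have hQmono : StrictMono Q := strictMono_nat_of_lt_succ fun n => hnext_lt n (Q n)
  obtain ⟨p, hp⟩ := IsCompact.nonempty_iInter_of_sequence_nonempty_isCompact_isClosed
    (fun n => nodeCylinder F (Q n)) (fun n => (hQ n).trans inter_subset_left)
    (fun n => ⟨_, nodePoint_mem_nodeCylinder F (Q n) (γ 0)⟩)
    (isClosed_nodeCylinder F _).isCompact (fun n => isClosed_nodeCylinder F _)
  exact ⟨p, mem_iInter.2 fun n => (hQ n (mem_iInter.1 hp (n + 1))).2,
    hF.mem_treeBody_diff_E0rel_of_frequently fun m => ⟨Q m, hQmono.id_le m, mem_iInter.1 hp m⟩⟩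

end IsFrame

/-- for `T` the tree on `2 × 2` generated by a frame, `⌈T⌉ ∩ 𝔼_0` is not
separable from `⌈T⌉ ∖ 𝔼_0` by a `pot(Π^0_2)` set. -/
theorem statement15 (F : ℕ → List Bool × List Bool) (hF : IsFrame F) :
    ¬ SepPot pi02Class (treeBody (frameTree F) ∩ E0rel)
        (treeBody (frameTree F) \ E0rel) := by
  rintro ⟨S, hS, hsub, hdisj⟩
  obtain ⟨G, hG, H, hH, hGδ⟩ := hS.exists_residual_isGδ_inter
  obtain ⟨p, hpS, hp⟩ := hF.exists_mem_diff_E0rel_of_isGδ hGδ fun q =>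
    (exists_nodePoint_mem_prod F hG hH q).imp fun γ hγ => ⟨hsub (hF.nodePoint_mem q γ), hγ⟩
  exact disjoint_left.1 hdisj hpS.1 hp
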